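/- For discrete random variables A, B, C: E_{c ← C}[ SD( (A,B)|_{C=c} , A|_{C=c} × B|_{C=c} ) ] ≤ 2 · SD( (A,C,B) , (A,C) × B ), where (A,C,B) denotes the joint distribution of A, C, B and (A,C) × B denotes the product of the distribution of (A,C) with the marginal of B. -/
import Mathlib


open scoped BigOperators Classical

noncomputable section

variable {Ω : Type*} [Fintype Ω]

/-- Probability of an event under a mass function `μ`. -/
def prEv (μ : Ω → ℝ) (E : Ω → Prop) : ℝ := ∑ ω, if E ω then μ ω else 0

/-- Distribution (pmf) of a random variable. -/
def rvDist (μ : Ω → ℝ) {α : Type*} (X : Ω → α) : α → ℝ :=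
  fun a => prEv μ (fun ω => X ω = a)

/-- Conditional distribution of `X` given the event `B = b`. -/
def condDist (μ : Ω → ℝ) {α β : Type*} (X : Ω → α) (B : Ω → β) (b : β) : α → ℝ :=
  fun a => prEv μ (fun ω => X ω = a ∧ B ω = b) / prEv μ (fun ω => B ω = b)

/-- Product of two distributions. -/
def prodDist {α β : Type*} (P : α → ℝ) (Q : β → ℝ) : α × β → ℝ := fun p => P p.1 * Q p.2

/-- Statistical (total variation) distance between two distributions on a finite set. -/
def SD {α : Type*} [Fintype α] (P Q : α → ℝ) : ℝ := (1/2) * ∑ a, |P a - Q a|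

/-- Shannon entropy (base 2) of a distribution, with the convention `0 · log(1/0) = 0`. -/
def H2 {α : Type*} [Fintype α] (P : α → ℝ) : ℝ :=
  ∑ a, if P a = 0 then 0 else P a * Real.logb 2 (1 / P a)

/-- Shannon entropy of a random variable. -/
def entRV (μ : Ω → ℝ) {α : Type*} [Fintype α] (X : Ω → α) : ℝ := H2 (rvDist μ X)

/-- Conditional mutual information `I(A;B|C)` (in bits). -/
def condMI (μ : Ω → ℝ) {α β γ : Type*} [Fintype α] [Fintype β] [Fintype γ]
    (A : Ω → α) (B : Ω → β) (C : Ω → γ) : ℝ :=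
  entRV μ (fun ω => (A ω, C ω)) + entRV μ (fun ω => (B ω, C ω))
    - entRV μ (fun ω => (A ω, B ω, C ω)) - entRV μ C

/-- The conditional probability measure given `Z = z`. -/
def condMeas (μ : Ω → ℝ) {ζ : Type*} (Z : Ω → ζ) (z : ζ) : Ω → ℝ :=
  fun ω => if Z ω = z then μ ω / prEv μ (fun ω' => Z ω' = z) else 0

/-- `μ` is a probability mass function. -/
def IsPMF (μ : Ω → ℝ) : Prop := (∀ ω, 0 ≤ μ ω) ∧ ∑ ω, μ ω = 1

end

lemma prEv_nonneg' {Ω : Type*} [Fintype Ω] {μ : Ω → ℝ} (hμ : ∀ ω, 0 ≤ μ ω)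
    (E : Ω → Prop) : 0 ≤ prEv μ E := by
  apply Finset.sum_nonneg
  intro ω _
  split
  · exact hμ ω
  · exact le_refl 0

lemma prEv_congr' {Ω : Type*} [Fintype Ω] (μ : Ω → ℝ) {E F : Ω → Prop}
    (h : ∀ ω, E ω ↔ F ω) : prEv μ E = prEv μ F := by
  unfold prEv
  apply Finset.sum_congr rfl
  intro ω _
  rw [if_congr (h ω) rfl rfl]

lemma prEv_sum_fiber' {Ω α : Type*} [Fintype Ω] [Fintype α] (μ : Ω → ℝ)
    (E : Ω → Prop) (X : Ω → α) :
    ∑ a : α, prEv μ (fun ω => E ω ∧ X ω = a) = prEv μ E := by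
  classical
  unfold prEv
  rw [Finset.sum_comm]
  apply Finset.sum_congr rfl
  intro ω _
  by_cases hE : E ω
  · simp [hE]
  · simp [hE]

/-- `E_{c ← C}[ SD((A,B)|_c , A|_c × B|_c) ] ≤ 2 · SD( joint of ((A,C),B) , (A,C) × B )`. -/
theorem expected_condSD_le_two_SD {Ω α β γ : Type*}
    [Fintype Ω] [Fintype α] [Fintype β] [Fintype γ]
    (μ : Ω → ℝ) (hμ : IsPMF μ)
    (A : Ω → α) (B : Ω → β) (C : Ω → γ) :
    ∑ c : γ, rvDist μ C c *
        SD (condDist μ (fun ω => (A ω, B ω)) C c)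
           (prodDist (condDist μ A C c) (condDist μ B C c))
      ≤ 2 * SD (rvDist μ (fun ω => ((A ω, C ω), B ω)))
               (prodDist (rvDist μ (fun ω => (A ω, C ω))) (rvDist μ B)) := by
  classical
  obtain ⟨hpos, hsum⟩ := hμ
  set J : α → β → γ → ℝ := fun a b c => prEv μ (fun ω => A ω = a ∧ B ω = b ∧ C ω = c) with hJ
  set Pac : α → γ → ℝ := fun a c => prEv μ (fun ω => A ω = a ∧ C ω = c) with hPac
  set Pbc : β → γ → ℝ := fun b c => prEv μ (fun ω => B ω = b ∧ C ω = c) with hPbc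
  set Q : β → ℝ := fun b => prEv μ (fun ω => B ω = b) with hQ
  set Pc : γ → ℝ := fun c => prEv μ (fun ω => C ω = c) with hPc
  have hPcnn : ∀ c, 0 ≤ Pc c := fun c => prEv_nonneg' hpos _
  have hPacnn : ∀ a c, 0 ≤ Pac a c := fun a c => prEv_nonneg' hpos _
  have hsumPac : ∀ c, ∑ a, Pac a c = Pc c := by
    intro c
    simp only [hPac, hPc]
    rw [← prEv_sum_fiber' μ (fun ω => C ω = c) A]
    exact Finset.sum_congr rfl fun a _ => prEv_congr' μ (fun ω => by tauto)
  have hsumJ : ∀ b c, ∑ a, J a b c = Pbc b c := by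
    intro b c
    simp only [hJ, hPbc]
    rw [← prEv_sum_fiber' μ (fun ω => B ω = b ∧ C ω = c) A]
    exact Finset.sum_congr rfl fun a _ => prEv_congr' μ (fun ω => by tauto)
  have key : ∀ c : γ, rvDist μ C c *
      SD (condDist μ (fun ω => (A ω, B ω)) C c)
         (prodDist (condDist μ A C c) (condDist μ B C c))
      ≤ ∑ b, ∑ a, |J a b c - Pac a c * Q b| := by
    intro c
    have hrv : rvDist μ C c = Pc c := rfl
    rw [hrv]
    by_cases hc : Pc c = 0
    · rw [hc, zero_mul]
      exact Finset.sum_nonneg fun b _ => Finset.sum_nonneg fun a _ => abs_nonneg _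
    · have hp : 0 < Pc c := lt_of_le_of_ne (hPcnn c) (Ne.symm hc)
      have hAB : ∀ a b, condDist μ (fun ω => (A ω, B ω)) C c (a, b) = J a b c / Pc c := by
        intro a b
        show prEv μ _ / prEv μ _ = _
        congr 1
        exact prEv_congr' μ (fun ω => by simp [Prod.ext_iff, and_assoc])
      have expand : Pc c * SD (condDist μ (fun ω => (A ω, B ω)) C c)
          (prodDist (condDist μ A C c) (condDist μ B C c))
          = (1/2) * ∑ b, ∑ a, |J a b c - Pac a c * (Pbc b c / Pc c)| := by
        unfold SD
        rw [Fintype.sum_prod_type]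
        rw [Finset.sum_comm]
        rw [mul_left_comm]
        congr 1
        rw [Finset.mul_sum]
        apply Finset.sum_congr rfl
        intro b _
        rw [Finset.mul_sum]
        apply Finset.sum_congr rfl
        intro a _
        rw [hAB a b]
        have hprod : prodDist (condDist μ A C c) (condDist μ B C c) (a, b)
            = (Pac a c / Pc c) * (Pbc b c / Pc c) := rfl
        have hinner : J a b c / Pc c - Pac a c / Pc c * (Pbc b c / Pc c)
            = (J a b c - Pac a c * (Pbc b c / Pc c)) / Pc c := by
          field_simp
        rw [hprod, hinner, abs_div, abs_of_pos hp, mul_comm, div_mul_cancel₀ _ hc]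
      rw [expand]
      have step : ∀ b : β, ∑ a, |J a b c - Pac a c * (Pbc b c / Pc c)|
          ≤ 2 * ∑ a, |J a b c - Pac a c * Q b| := by
        intro b
        have tri : ∀ a, |J a b c - Pac a c * (Pbc b c / Pc c)|
            ≤ |J a b c - Pac a c * Q b| + Pac a c * |Q b - Pbc b c / Pc c| := by
          intro a
          have hdecomp : J a b c - Pac a c * (Pbc b c / Pc c)
              = (J a b c - Pac a c * Q b) + Pac a c * (Q b - Pbc b c / Pc c) := by ring
          rw [hdecomp]
          refine (abs_add_le _ _).trans ?_
          rw [abs_mul, abs_of_nonneg (hPacnn a c)]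
        have hmarg : Pc c * Q b - Pbc b c = ∑ a, (Pac a c * Q b - J a b c) := by
          rw [Finset.sum_sub_distrib, ← Finset.sum_mul, hsumPac, hsumJ]
        calc ∑ a, |J a b c - Pac a c * (Pbc b c / Pc c)|
            ≤ ∑ a, (|J a b c - Pac a c * Q b| + Pac a c * |Q b - Pbc b c / Pc c|) :=
              Finset.sum_le_sum fun a _ => tri a
          _ = (∑ a, |J a b c - Pac a c * Q b|) + (∑ a, Pac a c) * |Q b - Pbc b c / Pc c| := by
              rw [Finset.sum_add_distrib, Finset.sum_mul]
          _ = (∑ a, |J a b c - Pac a c * Q b|) + |Pc c * Q b - Pbc b c| := by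
              rw [hsumPac c]
              congr 1
              have hq : Q b - Pbc b c / Pc c = (Pc c * Q b - Pbc b c) / Pc c := by
                field_simp
              rw [hq, abs_div, abs_of_pos hp, mul_comm, div_mul_cancel₀ _ hc]
          _ ≤ (∑ a, |J a b c - Pac a c * Q b|) + ∑ a, |J a b c - Pac a c * Q b| := by
              gcongr
              rw [hmarg]
              refine (Finset.abs_sum_le_sum_abs _ _).trans ?_
              exact le_of_eq (Finset.sum_congr rfl fun a _ => abs_sub_comm _ _)
          _ = 2 * ∑ a, |J a b c - Pac a c * Q b| := by ring
      have hsumstep := Finset.sum_le_sum fun b (_ : b ∈ Finset.univ) => step b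
      rw [← Finset.mul_sum] at hsumstep
      linarith
  have hjoint : ∀ (a : α) (c : γ) (b : β),
      rvDist μ (fun ω => ((A ω, C ω), B ω)) ((a, c), b) = J a b c := by
    intro a c b
    exact prEv_congr' μ (fun ω => by simp [Prod.ext_iff]; tauto)
  have hpair : ∀ (a : α) (c : γ), rvDist μ (fun ω => (A ω, C ω)) (a, c) = Pac a c := by
    intro a c
    exact prEv_congr' μ (fun ω => by simp [Prod.ext_iff])
  calc ∑ c : γ, rvDist μ C c *
        SD (condDist μ (fun ω => (A ω, B ω)) C c)
           (prodDist (condDist μ A C c) (condDist μ B C c))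
      ≤ ∑ c, ∑ b, ∑ a, |J a b c - Pac a c * Q b| :=
        Finset.sum_le_sum fun c _ => key c
    _ = ∑ a, ∑ c, ∑ b, |J a b c - Pac a c * Q b| := by
        have h1 : (∑ c, ∑ b, ∑ a, |J a b c - Pac a c * Q b|)
            = ∑ c, ∑ a, ∑ b, |J a b c - Pac a c * Q b| :=
          Finset.sum_congr rfl fun c _ => Finset.sum_comm
        rw [h1]
        exact Finset.sum_comm
    _ = 2 * SD (rvDist μ (fun ω => ((A ω, C ω), B ω)))
               (prodDist (rvDist μ (fun ω => (A ω, C ω))) (rvDist μ B)) := by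
        unfold SD
        rw [Fintype.sum_prod_type, Fintype.sum_prod_type]
        rw [← mul_assoc]
        norm_num
        apply Finset.sum_congr rfl
        intro a _
        apply Finset.sum_congr rfl
        intro c _
        apply Finset.sum_congr rfl
        intro b _
        rw [hjoint a c b]
        have hprod2 : prodDist (rvDist μ (fun ω => (A ω, C ω))) (rvDist μ B) ((a, c), b)
            = Pac a c * Q b := by rw [← hpair a c]; rfl
        rw [hprod2]
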